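/- Consider the composed stochastic systems x̂⁺ = A x̂ + B û + B_w ŵ + β and x⁺ = A x + B û + B_w w, with error e = x − x̂. Conditioned on the event w − ŵ = γ, the error evolves as e⁺ = A e + B_w γ − β. Suppose S = {e : eᵀDe ≤ ε²} is a robust controlled invariant set for these error dynamics with γ = F e, F e ∈ Γ for all e ∈ S, ℬ the disturbance set for β, sup_{e∈S} ‖Ce‖ ≤ ε, and the coupling satisfies W_γ(w − ŵ = γ) ≥ 1 − δ for all γ ∈ Γ. Then for every (x̂, x) with e ∈ S: (i) ‖Cx − Cx̂‖ ≤ ε, and (ii) with probability at least 1 − δ the successor error satisfies e⁺ ∈ S. -/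

import Mathlib

open Matrix MeasureTheory

theorem coupling_compensator_simulation_general {n d m : ℕ}
    (A : Matrix (Fin n) (Fin n) ℝ) (Bw : Matrix (Fin n) (Fin d) ℝ)
    (C : Matrix (Fin m) (Fin n) ℝ) (F : Matrix (Fin d) (Fin n) ℝ)
    (S : Set (Fin n → ℝ)) (Γ : Set (Fin d → ℝ)) (ℬ : Set (Fin n → ℝ))
    (ε δ : ℝ)
    (𝒲 : (Fin d → ℝ) → Measure ((Fin d → ℝ) × (Fin d → ℝ)))
    (h𝒲 : ∀ γ ∈ Γ,
      ENNReal.ofReal (1 - δ) ≤ 𝒲 γ {p : (Fin d → ℝ) × (Fin d → ℝ) | p.2 - p.1 = γ})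
    (hF : ∀ e ∈ S, F.mulVec e ∈ Γ)
    (hInv : ∀ e ∈ S, ∀ β ∈ ℬ, A.mulVec e + Bw.mulVec (F.mulVec e) - β ∈ S)
    (hC : ∀ e ∈ S, Real.sqrt ((C.mulVec e) ⬝ᵥ (C.mulVec e)) ≤ ε) :
    ∀ xhat x : Fin n → ℝ, x - xhat ∈ S →
      (Real.sqrt ((C.mulVec x - C.mulVec xhat) ⬝ᵥ (C.mulVec x - C.mulVec xhat)) ≤ ε) ∧
      (∀ β ∈ ℬ,
        ENNReal.ofReal (1 - δ) ≤
          𝒲 (F.mulVec (x - xhat))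
            {p : (Fin d → ℝ) × (Fin d → ℝ) |
              A.mulVec (x - xhat) + Bw.mulVec (p.2 - p.1) - β ∈ S}) := by
  intro xhat x he
  refine ⟨mulVec_sub C x xhat ▸ hC _ he, fun β hβ => ?_⟩
  -- On the coupling event `w - ŵ = F e` the error follows the invariant closed-loop map.
  have event_subset :
      {p : (Fin d → ℝ) × (Fin d → ℝ) | p.2 - p.1 = F.mulVec (x - xhat)} ⊆
        {p | A.mulVec (x - xhat) + Bw.mulVec (p.2 - p.1) - β ∈ S} := by
    rintro p (hp : p.2 - p.1 = _)
    simpa only [Set.mem_ofPred_eq, hp] using hInv _ he β hβ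
  exact (h𝒲 _ (hF _ he)).trans (measure_mono event_subset)

/-- Conditions for an `(ε,δ)`-stochastic simulation relation via a coupling compensator:
given an invariant ellipsoid `S` for the error dynamics `e⁺ = Ae + B_w γ - β` with
feedback `γ = Fe ∈ Γ`, output bound `‖Ce‖ ≤ ε` on `S`, and a family of couplings `𝒲 γ`
satisfying `𝒲 γ(w - ŵ = γ) ≥ 1 - δ` on `Γ`, every pair with error `e = x - x̂ ∈ S`
satisfies (i) `‖Cx - Cx̂‖ ≤ ε` and (ii) the successor error lies in `S` with probability
at least `1 - δ`. -/
theorem coupling_compensator_simulation {n d m : ℕ}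
    (A : Matrix (Fin n) (Fin n) ℝ) (Bw : Matrix (Fin n) (Fin d) ℝ)
    (C : Matrix (Fin m) (Fin n) ℝ) (F : Matrix (Fin d) (Fin n) ℝ)
    (S : Set (Fin n → ℝ)) (Γ : Set (Fin d → ℝ)) (ℬ : Set (Fin n → ℝ))
    (ε δ : ℝ) (hε : 0 < ε) (hδ : 0 ≤ δ)
    (𝒲 : (Fin d → ℝ) → Measure ((Fin d → ℝ) × (Fin d → ℝ)))
    (h𝒲prob : ∀ γ, IsProbabilityMeasure (𝒲 γ))
    (h𝒲 : ∀ γ ∈ Γ,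
      ENNReal.ofReal (1 - δ) ≤ 𝒲 γ {p : (Fin d → ℝ) × (Fin d → ℝ) | p.2 - p.1 = γ})
    (hF : ∀ e ∈ S, F.mulVec e ∈ Γ)
    (hInv : ∀ e ∈ S, ∀ β ∈ ℬ, A.mulVec e + Bw.mulVec (F.mulVec e) - β ∈ S)
    (hC : ∀ e ∈ S, Real.sqrt ((C.mulVec e) ⬝ᵥ (C.mulVec e)) ≤ ε) :
    ∀ xhat x : Fin n → ℝ, x - xhat ∈ S →
      (Real.sqrt ((C.mulVec x - C.mulVec xhat) ⬝ᵥ (C.mulVec x - C.mulVec xhat)) ≤ ε) ∧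
      (∀ β ∈ ℬ,
        ENNReal.ofReal (1 - δ) ≤
          𝒲 (F.mulVec (x - xhat))
            {p : (Fin d → ℝ) × (Fin d → ℝ) |
              A.mulVec (x - xhat) + Bw.mulVec (p.2 - p.1) - β ∈ S}) :=
  coupling_compensator_simulation_general A Bw C F S Γ ℬ ε δ 𝒲 h𝒲 hF hInv hC
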